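/- Let H be a finite hypergraph with e-index k, minimum unified degree δ*(H), and ∂(H) included edges of cardinality at least 2. Then the largest eigenvalue λ₁(H) of U(H) satisfies λ₁(H) ≥ δ*(H) − ∂(H)/k. -/

import Mathlib

variable {V : Type} [Fintype V] [DecidableEq V]

/-- A finite hypergraph: a finite vertex set and a multiset of nonempty edges. -/
structure UHypergraph (V : Type) [Fintype V] [DecidableEq V] where
  verts : Finset V
  edges : Multiset (Finset V)
  edges_sub : ∀ e ∈ edges, e ⊆ verts
  edges_nonempty : ∀ e ∈ edges, e.Nonempty

open Classical in
/-- `IH H` is `I(H)`: all parts of 2-partitions of edges plus all singletons of `V(H)`. -/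
noncomputable def IH (H : UHypergraph V) : Finset (Finset V) :=
  Finset.univ.filter fun S =>
    (S.Nonempty ∧ ∃ e ∈ H.edges, S ⊂ e) ∨ ∃ v ∈ H.verts, S = {v}

/-- The unified matrix of a hypergraph, indexed by `I(H)`. -/
noncomputable def U (H : UHypergraph V) : Matrix ↥(IH H) ↥(IH H) ℝ := fun S T =>
  if (S : Finset V) = (T : Finset V) then
    (if (S : Finset V).card = 1 then (H.edges.count (S : Finset V) : ℝ) else 0)
  else if Disjoint (S : Finset V) (T : Finset V) then
    (H.edges.count ((S : Finset V) ∪ (T : Finset V)) : ℝ)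
  else 0

/-- Degree of a vertex: number of edges (with multiplicity) containing it. -/
def deg (H : UHypergraph V) (v : V) : ℕ := (H.edges.filter (fun e => v ∈ e)).card

/-- Unified degree of a set `S`: number of edges (with multiplicity) containing `S`. -/
def udeg (H : UHypergraph V) (S : Finset V) : ℕ := (H.edges.filter (fun e => S ⊆ e)).card

/-- `incl H` = ∂(H): number of edges of cardinality ≥ 2 properly contained in another edge. -/
noncomputable def incl (H : UHypergraph V) : ℕ :=
  Multiset.card (H.edges.filter (fun e => 2 ≤ e.card ∧ ∃ e' ∈ H.edges, e ⊂ e'))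

/-- A hypergraph is simple if it has no multiple edges and no loops. -/
def Simple (H : UHypergraph V) : Prop :=
  H.edges.Nodup ∧ ∀ e ∈ H.edges, 2 ≤ e.card

/-- `tau S` = τ(S): the set of unordered 2-partitions of `S`. -/
def tau (S : Finset V) : Finset (Finset (Finset V)) :=
  (S.powerset.filter fun A => A.Nonempty ∧ A ⊂ S).image fun A => {A, S \ A}

/-!
Rayleigh's principle with the all-ones vector gives `k λ₁ ≥ ∑_{S,T} U(H)_{S,T}`. Expanding each
entry of `U(H)` as a sum over edges, an edge `e` contributes one to `(S, e \ S)` for every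
`S ∈ I(H)` with `S ⊂ e`, and to the diagonal entry `(e, e)` exactly when `|e| = 1`. Since
`e ∈ I(H)` iff `|e| = 1` or `e` is properly contained in another edge, `e` contributes
`#{S ∈ I(H) | S ⊆ e}`, less one when `e` is counted by `∂(H)`. Summing over the edges, the
entries add up to `∑_S d_H(S) - ∂(H) ≥ k δ*(H) - ∂(H)`.
-/

open Finset

theorem Multiset.card_filter_eq_sum_map_ite {α : Type*} (m : Multiset α) (p : α → Prop)
    [DecidablePred p] : (m.filter p).card = (m.map fun a => if p a then 1 else 0).sum := by
  induction m using Multiset.induction_on with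
  | empty => simp
  | cons a s ih => by_cases h : p a <;> simp [h, ih, add_comm]

theorem Finset.disjoint_and_eq_union_iff {α : Type*} [DecidableEq α] {S T e : Finset α}
    (hT : T.Nonempty) : Disjoint S T ∧ e = S ∪ T ↔ T = e \ S ∧ S ⊂ e := by
  constructor
  · rintro ⟨hd, rfl⟩
    refine ⟨(union_sdiff_cancel_left hd).symm, ssubset_iff_subset_ne.mpr ⟨subset_union_left, ?_⟩⟩
    intro hS
    obtain ⟨x, hx⟩ := hT
    exact disjoint_left.mp hd (hS ▸ mem_union_right S hx) hx
  · rintro ⟨rfl, hSe⟩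
    exact ⟨disjoint_sdiff, (union_sdiff_of_subset hSe.subset).symm⟩

open Matrix in
open scoped MatrixOrder in
theorem Matrix.IsHermitian.dotProduct_mulVec_le {n : Type*} [Fintype n] [DecidableEq n]
    {A : Matrix n n ℝ} (hA : A.IsHermitian) {r : ℝ} (hr : ∀ i, hA.eigenvalues i ≤ r)
    (x : n → ℝ) : x ⬝ᵥ (A *ᵥ x) ≤ r * (x ⬝ᵥ x) := by
  have hle : A ≤ algebraMap ℝ (Matrix n n ℝ) r := by
    refine le_algebraMap_of_spectrum_le ?_ hA.isSelfAdjoint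
    rw [hA.spectrum_real_eq_range_eigenvalues]
    rintro _ ⟨i, rfl⟩
    exact hr i
  simpa [sub_mulVec, Algebra.algebraMap_eq_smul_one, smul_mulVec, dotProduct_sub,
    dotProduct_smul] using (le_iff.mp hle).dotProduct_mulVec_nonneg x

namespace UHypergraph

variable {H : UHypergraph V} {S e : Finset V}

theorem mem_IH : S ∈ IH H ↔ (S.Nonempty ∧ ∃ e ∈ H.edges, S ⊂ e) ∨ ∃ v ∈ H.verts, S = {v} := by
  simp [IH]

theorem nonempty_of_mem_IH (hS : S ∈ IH H) : S.Nonempty := by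
  rcases mem_IH.mp hS with ⟨hne, -⟩ | ⟨v, -, rfl⟩
  exacts [hne, singleton_nonempty v]

theorem sdiff_mem_IH (he : e ∈ H.edges) (hS : S.Nonempty) (hSe : S ⊂ e) : e \ S ∈ IH H :=
  mem_IH.mpr <| .inl ⟨sdiff_nonempty.mpr hSe.not_subset, e, he, sdiff_ssubset hSe.subset hS⟩

theorem mem_IH_iff_of_mem_edges (he : e ∈ H.edges) :
    e ∈ IH H ↔ e.card = 1 ∨ 2 ≤ e.card ∧ ∃ e' ∈ H.edges, e ⊂ e' := by
  have hne := H.edges_nonempty e he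
  by_cases h1 : e.card = 1
  · obtain ⟨v, rfl⟩ := card_eq_one.mp h1
    simpa using mem_IH.mpr (.inr ⟨v, H.edges_sub _ he (mem_singleton_self v), rfl⟩)
  · have h2 : 2 ≤ e.card := by have := card_pos.mpr hne; omega
    simp only [h1, h2, false_or, true_and, mem_IH]
    refine ⟨?_, fun h => .inl ⟨hne, h⟩⟩
    rintro (⟨-, h⟩ | ⟨v, -, rfl⟩)
    exacts [h, absurd (card_singleton v) h1]

def unifiedEntry (S T e : Finset V) : ℕ :=
  (if S = T ∧ S.card = 1 ∧ e = S then 1 else 0) +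
    if S ≠ T ∧ Disjoint S T ∧ e = S ∪ T then 1 else 0

theorem sum_map_unifiedEntry (S T : Finset V) :
    (H.edges.map fun e => unifiedEntry S T e).sum =
      if S = T then (if S.card = 1 then H.edges.count S else 0)
      else if Disjoint S T then H.edges.count (S ∪ T) else 0 := by
  simp only [Multiset.count_eq_card_filter_eq, Multiset.card_filter_eq_sum_map_ite]
  split_ifs <;> simp_all [unifiedEntry, eq_comm]

theorem U_apply (S T : IH H) : U H S T = (H.edges.map fun e => unifiedEntry S T e).sum := by
  rw [sum_map_unifiedEntry]
  simp only [U]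
  split_ifs <;> simp

theorem sum_unifiedEntry_right (he : e ∈ H.edges) (hS : S ∈ IH H) :
    ∑ T ∈ IH H, unifiedEntry S T e =
      (if S.card = 1 ∧ e = S then 1 else 0) + if S ⊂ e then 1 else 0 := by
  have hoff : ∀ T ∈ IH H, (S ≠ T ∧ Disjoint S T ∧ e = S ∪ T) ↔ T = e \ S ∧ S ⊂ e := by
    intro T hT
    rw [← disjoint_and_eq_union_iff (nonempty_of_mem_IH hT)]
    refine and_iff_right_of_imp fun ⟨hd, _⟩ hST => ?_
    exact (nonempty_of_mem_IH hS).ne_empty (disjoint_self.mp (hST ▸ hd))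
  simp only [unifiedEntry]
  rw [sum_add_distrib, sum_congr rfl fun T hT => if_congr (hoff T hT) rfl rfl]
  by_cases hSe : S ⊂ e
  · simp [ite_and, hS, hSe, sdiff_mem_IH he (nonempty_of_mem_IH hS) hSe]
  · simp [ite_and, hS, hSe]

theorem sum_sum_unifiedEntry_add (he : e ∈ H.edges) :
    ∑ S ∈ IH H, ∑ T ∈ IH H, unifiedEntry S T e +
        (if 2 ≤ e.card ∧ ∃ e' ∈ H.edges, e ⊂ e' then 1 else 0) =
      ∑ S ∈ IH H, if S ⊆ e then 1 else 0 := by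
  have hsub : ∀ S, (if S ⊆ e then 1 else 0) =
      (if S ⊂ e then 1 else 0) + if e = S then 1 else 0 := by
    intro S
    by_cases h : e = S
    · simp [h]
    · simp [h, ssubset_iff_subset_ne, Ne.symm h]
  rw [sum_congr rfl fun S hS => sum_unifiedEntry_right he hS, sum_congr rfl fun S _ => hsub S,
    sum_add_distrib, sum_add_distrib]
  simp only [and_comm (a := _ = 1), ite_and, sum_ite_eq, mem_IH_iff_of_mem_edges he]
  by_cases h1 : e.card = 1 <;> simp [h1, add_comm, ite_and]

theorem sum_sum_unifiedEntry_add_incl :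
    ∑ S ∈ IH H, ∑ T ∈ IH H, (H.edges.map fun e => unifiedEntry S T e).sum + incl H =
      ∑ S ∈ IH H, udeg H S := by
  simp only [udeg, incl, Multiset.card_filter_eq_sum_map_ite, ← Multiset.sum_map_sum,
    ← Multiset.sum_map_add]
  exact congrArg Multiset.sum (Multiset.map_congr rfl fun e he => sum_sum_unifiedEntry_add he)

theorem sum_U_add_incl : ∑ S, ∑ T, U H S T + incl H = ∑ S : IH H, (udeg H S : ℝ) := by
  have h := sum_sum_unifiedEntry_add_incl (H := H)
  simp only [← sum_coe_sort (IH H)] at h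
  simp only [U_apply]
  exact_mod_cast h

end UHypergraph

theorem lambda_one_ge_min_unified_degree (H : UHypergraph V) (hU : (U H).IsHermitian)
    (i₀ : ↥(IH H)) (hmax : ∀ i, hU.eigenvalues i ≤ hU.eigenvalues i₀) :
    (((IH H).inf' ⟨i₀.1, i₀.2⟩ (udeg H) : ℕ) : ℝ) - (incl H : ℝ) / ((IH H).card : ℝ) ≤
      hU.eigenvalues i₀ := by
  have hne : (IH H).Nonempty := ⟨i₀.1, i₀.2⟩
  have hk : (0 : ℝ) < (IH H).card := by exact_mod_cast hne.card_pos
  have hmin : ((IH H).card : ℝ) * (IH H).inf' hne (udeg H) ≤ ∑ S : IH H, (udeg H S : ℝ) := by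
    rw [← Fintype.card_coe, ← nsmul_eq_mul, ← card_univ, ← sum_const]
    exact sum_le_sum fun S _ => by exact_mod_cast inf'_le _ S.2
  have hray := hU.dotProduct_mulVec_le hmax 1
  rw [one_dotProduct_one, Fintype.card_coe, one_dotProduct] at hray
  simp only [Matrix.mulVec, dotProduct_one] at hray
  rw [sub_le_iff_le_add, ← sub_le_iff_le_add', le_div_iff₀ hk]
  linarith [UHypergraph.sum_U_add_incl (H := H)]
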